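/- Disjoint decomposition of forest families: for a forest of subtrees ℱ of depth ≤ 1 (pairwise disjoint trees), one has ⊔_{𝒢 ∈ 𝔽_<[ℱ]} ⊔_{𝒢' ∈ 𝔽[𝒢]} (𝒢' ⊔ ℱ) = 𝔽[ℱ], i.e. every forest whose set of maximal trees equals ℱ is uniquely obtained as ℱ together with a forest 𝒢' all of whose trees are strictly contained in trees of ℱ, where 𝒢 = Max(𝒢'). -/

import Mathlib

open scoped Classical

variable {V : Type*}

/-- The maximal elements (w.r.t. strict inclusion) of a finite family of trees. -/
noncomputable def maxElems (F : Finset (Finset V)) : Finset (Finset V) :=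
  F.filter fun S => ∀ T ∈ F, ¬ S ⊂ T

/-- A forest of divergent subtrees: a finite collection of trees drawn from `Div`
whose members are pairwise nested or disjoint. -/
def IsForestIn (Div : Set (Finset V)) (F : Finset (Finset V)) : Prop :=
  (↑F ⊆ Div) ∧ ∀ S ∈ F, ∀ T ∈ F, S ⊆ T ∨ T ⊆ S ∨ S ∩ T = ∅

/-!
The trees of `F` are nonempty (as `∅ ∉ Div`) and pairwise disjoint, so none of them lies strictly
inside another tree of `F`, nor inside a tree that is itself strictly below `F`. Hence adjoining to
`F` a forest strictly below it keeps the union a forest with maximal trees exactly `F`. Conversely,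
if `Max H = F` then every tree of `H \ F` lies strictly inside its maximal superset in `F`, so
`H = F ∪ (H \ F)` is such a decomposition; it is unique because disjointness forces the second
part to be `H \ F`, and the first part to be its set of maximal trees.
-/

section

variable {Div : Set (Finset V)} {F G H : Finset (Finset V)}

lemma mem_maxElems {S : Finset V} : S ∈ maxElems H ↔ S ∈ H ∧ ∀ T ∈ H, ¬ S ⊂ T :=
  Finset.mem_filter

lemma mem_maxElems_iff_maximal {S : Finset V} : S ∈ maxElems H ↔ Maximal (· ∈ H) S := by
  rw [mem_maxElems, maximal_iff_forall_gt]
  exact and_congr_right fun _ => ⟨fun h T hST hT => h T hT hST, fun h T hT hST => h hST hT⟩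

lemma maxElems_subset (H : Finset (Finset V)) : maxElems H ⊆ H :=
  Finset.filter_subset _ _

lemma exists_mem_maxElems_superset {S : Finset V} (hS : S ∈ H) :
    ∃ M ∈ maxElems H, S ⊆ M := by
  obtain ⟨M, hSM, hM⟩ := H.exists_le_maximal hS
  exact ⟨M, mem_maxElems_iff_maximal.2 hM, hSM⟩

lemma forall_exists_ssuperset_of_maxElems (h : ∀ S ∈ maxElems G, ∃ T ∈ F, S ⊂ T) :
    ∀ S ∈ G, ∃ T ∈ F, S ⊂ T := by
  intro S hS
  obtain ⟨M, hM, hSM⟩ := exists_mem_maxElems_superset hS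
  obtain ⟨T, hT, hMT⟩ := h M hM
  exact ⟨T, hT, hSM.trans_ssubset hMT⟩

lemma exists_ssuperset_of_mem_sdiff_maxElems (hH : maxElems H = F) :
    ∀ S ∈ H \ F, ∃ T ∈ F, S ⊂ T := by
  intro S hS
  rw [Finset.mem_sdiff] at hS
  obtain ⟨M, hM, hSM⟩ := exists_mem_maxElems_superset hS.1
  rw [hH] at hM
  exact ⟨M, hM, hSM.ssubset_of_ne fun hSM => hS.2 (hSM ▸ hM)⟩

lemma IsForestIn.mono (hH : IsForestIn Div H) (hGH : G ⊆ H) : IsForestIn Div G :=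
  ⟨(Finset.coe_subset.2 hGH).trans hH.1, fun S hS T hT => hH.2 S (hGH hS) T (hGH hT)⟩

lemma IsForestIn.union (hF : IsForestIn Div F) (hG : IsForestIn Div G)
    (hFG : ∀ S ∈ F, ∀ T ∈ G, S ⊆ T ∨ T ⊆ S ∨ S ∩ T = ∅) : IsForestIn Div (F ∪ G) := by
  refine ⟨by simpa only [Finset.coe_union, Set.union_subset_iff] using ⟨hF.1, hG.1⟩, ?_⟩
  intro S hS T hT
  rcases Finset.mem_union.1 hS with hS | hS <;> rcases Finset.mem_union.1 hT with hT | hT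
  · exact hF.2 S hS T hT
  · exact hFG S hS T hT
  · have h := hFG T hT S hS
    rw [Finset.inter_comm] at h
    tauto
  · exact hG.2 S hS T hT

lemma IsForestIn.maxElems_inter_eq_empty (hH : IsForestIn Div H) :
    ∀ S ∈ maxElems H, ∀ T ∈ maxElems H, S ≠ T → S ∩ T = ∅ := by
  intro S hS T hT hST
  rw [mem_maxElems] at hS hT
  rcases hH.2 S hS.1 T hT.1 with h | h | h
  · exact absurd (h.ssubset_of_ne hST) (hS.2 T hT.1)
  · exact absurd (h.ssubset_of_ne hST.symm) (hT.2 S hS.1)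
  · exact h

end

section DepthOne

variable {Div : Set (Finset V)} {F G : Finset (Finset V)}

lemma not_ssubset_of_pairwise_inter_eq_empty
    (hFdisj : ∀ S ∈ F, ∀ T ∈ F, S ≠ T → S ∩ T = ∅) (hFne : ∀ S ∈ F, S.Nonempty)
    {S T : Finset V} (hS : S ∈ F) (hT : T ∈ F) : ¬ S ⊂ T := by
  intro hST
  have h := hFdisj S hS T hT hST.ne
  rw [Finset.inter_eq_left.2 hST.subset] at h
  exact (hFne S hS).ne_empty h

lemma not_ssubset_of_below
    (hFdisj : ∀ S ∈ F, ∀ T ∈ F, S ≠ T → S ∩ T = ∅) (hFne : ∀ S ∈ F, S.Nonempty)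
    (hG : ∀ S ∈ G, ∃ T ∈ F, S ⊂ T) {S T : Finset V} (hS : S ∈ F) (hT : T ∈ G) : ¬ S ⊂ T := by
  intro hST
  obtain ⟨T', hT', hTT'⟩ := hG T hT
  exact not_ssubset_of_pairwise_inter_eq_empty hFdisj hFne hS hT' (hST.trans hTT')

lemma disjoint_of_below
    (hFdisj : ∀ S ∈ F, ∀ T ∈ F, S ≠ T → S ∩ T = ∅) (hFne : ∀ S ∈ F, S.Nonempty)
    (hG : ∀ S ∈ G, ∃ T ∈ F, S ⊂ T) : Disjoint F G := by
  refine Finset.disjoint_left.2 fun S hSF hSG => ?_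
  obtain ⟨T, hT, hST⟩ := hG S hSG
  exact not_ssubset_of_pairwise_inter_eq_empty hFdisj hFne hSF hT hST

lemma maxElems_union_of_below
    (hFdisj : ∀ S ∈ F, ∀ T ∈ F, S ≠ T → S ∩ T = ∅) (hFne : ∀ S ∈ F, S.Nonempty)
    (hG : ∀ S ∈ G, ∃ T ∈ F, S ⊂ T) : maxElems (F ∪ G) = F := by
  ext S
  rw [mem_maxElems, Finset.mem_union]
  constructor
  · rintro ⟨hS | hS, hmax⟩
    · exact hS
    · obtain ⟨T, hT, hST⟩ := hG S hS
      exact absurd hST (hmax T (Finset.mem_union_left _ hT))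
  · refine fun hS => ⟨Or.inl hS, fun T hT => ?_⟩
    rcases Finset.mem_union.1 hT with hT | hT
    · exact not_ssubset_of_pairwise_inter_eq_empty hFdisj hFne hS hT
    · exact not_ssubset_of_below hFdisj hFne hG hS hT

lemma IsForestIn.union_of_below (hF : IsForestIn Div F) (hG : IsForestIn Div G)
    (hFdisj : ∀ S ∈ F, ∀ T ∈ F, S ≠ T → S ∩ T = ∅) (hGF : ∀ S ∈ G, ∃ T ∈ F, S ⊂ T) :
    IsForestIn Div (F ∪ G) := by
  refine hF.union hG fun S hS T hT => ?_
  obtain ⟨T', hT', hTT'⟩ := hGF T hT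
  by_cases hST' : S = T'
  · exact Or.inr (Or.inl (hST' ▸ hTT'.subset))
  · refine Or.inr (Or.inr (Finset.subset_empty.1 ?_))
    exact hFdisj S hS T' hT' hST' ▸ Finset.inter_subset_inter_left hTT'.subset

end DepthOne

/-- disjoint decomposition of forest families. Let `ℱ` be a forest
of depth `≤ 1` (pairwise disjoint trees). Then every forest `𝒢'` whose trees are
strictly contained in trees of `ℱ` gives rise to a forest `ℱ ⊔ 𝒢'` whose set of
maximal trees is `ℱ`; and conversely every forest `H` with `Max(H) = ℱ` is uniquely
obtained as `ℱ ⊔ 𝒢'` from such a `𝒢'`, with `𝒢 = Max(𝒢')` of depth `≤ 1` lying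
strictly below `ℱ`.  In other words,
`⊔_{𝒢 ∈ 𝔽_<[ℱ]} ⊔_{𝒢' ∈ 𝔽[𝒢]} (𝒢' ⊔ ℱ) = 𝔽[ℱ]`. -/
theorem forest_decomposition (Div : Set (Finset V)) (hDiv : ∅ ∉ Div)
    (F : Finset (Finset V)) (hF : IsForestIn Div F)
    (hFdisj : ∀ S ∈ F, ∀ T ∈ F, S ≠ T → S ∩ T = ∅) :
    (∀ G G' : Finset (Finset V),
        (IsForestIn Div G ∧ (∀ S ∈ G, ∀ T ∈ G, S ≠ T → S ∩ T = ∅) ∧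
          ∀ S ∈ G, ∃ T ∈ F, S ⊂ T) →
        (IsForestIn Div G' ∧ maxElems G' = G) →
        Disjoint F G' ∧ IsForestIn Div (F ∪ G') ∧ maxElems (F ∪ G') = F) ∧
      ∀ H : Finset (Finset V), IsForestIn Div H → maxElems H = F →
        ∃! p : Finset (Finset V) × Finset (Finset V),
          (IsForestIn Div p.1 ∧ (∀ S ∈ p.1, ∀ T ∈ p.1, S ≠ T → S ∩ T = ∅) ∧
            ∀ S ∈ p.1, ∃ T ∈ F, S ⊂ T) ∧
          (IsForestIn Div p.2 ∧ maxElems p.2 = p.1) ∧ H = F ∪ p.2 := by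
  have hFne : ∀ S ∈ F, S.Nonempty := fun S hS =>
    Finset.nonempty_iff_ne_empty.2 fun h => hDiv (h ▸ hF.1 hS)
  refine ⟨fun G G' ⟨_, _, hGF⟩ ⟨hG', hG'G⟩ => ?_, fun H hH hHF => ?_⟩
  · have hG'F := forall_exists_ssuperset_of_maxElems (hG'G ▸ hGF)
    exact ⟨disjoint_of_below hFdisj hFne hG'F, hF.union_of_below hG' hFdisj hG'F,
      maxElems_union_of_below hFdisj hFne hG'F⟩
  have hH' : IsForestIn Div (H \ F) := hH.mono Finset.sdiff_subset
  have hbelow := exists_ssuperset_of_mem_sdiff_maxElems hHF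
  refine ⟨(maxElems (H \ F), H \ F), ⟨⟨hH'.mono (maxElems_subset _),
      hH'.maxElems_inter_eq_empty, fun S hS => hbelow S (maxElems_subset _ hS)⟩, ⟨hH', rfl⟩,
      (Finset.union_sdiff_of_subset (hHF ▸ maxElems_subset H)).symm⟩, ?_⟩
  rintro ⟨G, G'⟩ ⟨⟨_, _, hGF⟩, ⟨_, hG'G⟩, rfl⟩
  have hG' : (F ∪ G') \ F = G' := Finset.union_sdiff_cancel_left
    (disjoint_of_below hFdisj hFne (forall_exists_ssuperset_of_maxElems (hG'G ▸ hGF)))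
  simp only [hG', hG'G]
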